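/- Let S be a complex structure on ℍ^{n+1} and let W = {v ∈ ℍ^{n+1} : S(v) = v·i} be its +i eigenspace. Then W is a complex subspace of ℍ^{n+1} (for the complex structure given by right scalar multiplication by i), W has complex dimension n+1, and ℍ^{n+1} decomposes as the direct sum of complex subspaces ℍ^{n+1} = W ⊕ W·j. -/

import Mathlib

/-!
`S` commutes with right multiplication by quaternions, so `S (v·j) = S(v)·j`; since `i j = -j i`,
this identifies `W·j` with the `-i` eigenspace `{v : S v = -v·i}`. The two eigenspaces meet
only in `0`, and because `S² = -1` every vector splits as
`v = ½ (v - S(v)·i) + ½ (v + S(v)·i)` with summands in `W` and `W·j`. Right multiplication by `j`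
is injective, so both summands have the same real dimension, half of `4(n+1)`.
-/

open Quaternion MulOpposite Module

def quatI : ℍ[ℝ] := ⟨0, 1, 0, 0⟩

def quatJ : ℍ[ℝ] := ⟨0, 0, 1, 0⟩

noncomputable def qRightMul (m : ℕ) (q : ℍ[ℝ]) : (Fin m → ℍ[ℝ]) →ₗ[ℝ] (Fin m → ℍ[ℝ]) where
  toFun v := fun idx => v idx * q
  map_add' v w := by funext idx; simp [add_mul]
  map_smul' r v := by funext idx; simp [smul_mul_assoc]

lemma quatI_mul_quatI : quatI * quatI = -1 := by
  ext <;> simp [Quaternion.re_mul, Quaternion.imI_mul, Quaternion.imJ_mul, Quaternion.imK_mul] <;>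
    simp [quatI]

lemma quatJ_mul_quatJ : quatJ * quatJ = -1 := by
  ext <;> simp [Quaternion.re_mul, Quaternion.imI_mul, Quaternion.imJ_mul, Quaternion.imK_mul] <;>
    simp [quatJ]

lemma quatJ_mul_quatI : quatJ * quatI = -(quatI * quatJ) := by
  ext <;> simp [Quaternion.re_mul, Quaternion.imI_mul, Quaternion.imJ_mul, Quaternion.imK_mul] <;>
    simp [quatI, quatJ]

lemma quatI_ne_zero : quatI ≠ 0 := fun h => by simpa [quatI] using congrArg (·.imI) h

lemma quatJ_ne_zero : quatJ ≠ 0 := fun h => by simpa [quatJ] using congrArg (·.imJ) h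

section qRightMul

variable {m : ℕ}

@[simp]
lemma qRightMul_apply (q : ℍ[ℝ]) (v : Fin m → ℍ[ℝ]) (l : Fin m) :
    qRightMul m q v l = v l * q := rfl

lemma qRightMul_qRightMul (p q : ℍ[ℝ]) (v : Fin m → ℍ[ℝ]) :
    qRightMul m p (qRightMul m q v) = qRightMul m (q * p) v := by
  funext l; simp [mul_assoc]

lemma qRightMul_neg (q : ℍ[ℝ]) (v : Fin m → ℍ[ℝ]) :
    qRightMul m (-q) v = -qRightMul m q v := by
  funext l; simp

lemma qRightMul_neg_one (v : Fin m → ℍ[ℝ]) : qRightMul m (-1) v = -v := by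
  funext l; simp

lemma qRightMul_injective {q : ℍ[ℝ]} (hq : q ≠ 0) : Function.Injective (qRightMul m q) :=
  fun _ _ h => funext fun l => mul_right_cancel₀ hq (congrFun h l)

lemma finrank_map_qRightMul {q : ℍ[ℝ]} (hq : q ≠ 0) (W : Submodule ℝ (Fin m → ℍ[ℝ])) :
    finrank ℝ (W.map (qRightMul m q)) = finrank ℝ W :=
  (Submodule.equivMapOfInjective _ (qRightMul_injective hq) W).finrank_eq.symm

lemma finrank_fin_quaternion : finrank ℝ (Fin m → ℍ[ℝ]) = 4 * m := by
  rw [Module.finrank_pi_fintype]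
  simp [mul_comm, Quaternion.finrank_eq_four]

lemma map_qRightMul (S : (Fin m → ℍ[ℝ]) →ₗ[(ℍ[ℝ])ᵐᵒᵖ] (Fin m → ℍ[ℝ])) (q : ℍ[ℝ])
    (v : Fin m → ℍ[ℝ]) : S (qRightMul m q v) = qRightMul m q (S v) :=
  map_smul S (op q) v

end qRightMul

section Eigenspaces

variable {m : ℕ} {S : (Fin m → ℍ[ℝ]) →ₗ[(ℍ[ℝ])ᵐᵒᵖ] (Fin m → ℍ[ℝ])}
  {W : Submodule ℝ (Fin m → ℍ[ℝ])} (hW : ∀ v, v ∈ W ↔ S v = qRightMul m quatI v)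
include hW

lemma qRightMul_quatI_mem {v : Fin m → ℍ[ℝ]} (hv : v ∈ W) : qRightMul m quatI v ∈ W := by
  rw [hW] at hv ⊢
  rw [map_qRightMul, hv]

lemma mem_map_quatJ_iff (v : Fin m → ℍ[ℝ]) :
    v ∈ W.map (qRightMul m quatJ) ↔ S v = -qRightMul m quatI v := by
  constructor
  · rintro ⟨u, hu, rfl⟩
    rw [map_qRightMul, (hW u).1 hu, qRightMul_qRightMul, qRightMul_qRightMul, quatJ_mul_quatI,
      qRightMul_neg, neg_neg]
  · intro hv
    refine ⟨-qRightMul m quatJ v, ?_, ?_⟩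
    · rw [SetLike.mem_coe, hW, map_neg, map_qRightMul, hv, map_neg, map_neg, qRightMul_qRightMul,
        qRightMul_qRightMul, quatJ_mul_quatI, qRightMul_neg, neg_neg]
    · rw [map_neg, qRightMul_qRightMul, quatJ_mul_quatJ, qRightMul_neg_one, neg_neg]

lemma qRightMul_quatI_mem_map_quatJ {v : Fin m → ℍ[ℝ]} (hv : v ∈ W.map (qRightMul m quatJ)) :
    qRightMul m quatI v ∈ W.map (qRightMul m quatJ) := by
  rw [mem_map_quatJ_iff hW] at hv ⊢
  rw [map_qRightMul, hv, map_neg]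

lemma disjoint_map_quatJ : Disjoint W (W.map (qRightMul m quatJ)) := by
  refine Submodule.disjoint_def.2 fun v hv hv' => qRightMul_injective quatI_ne_zero ?_
  have h : qRightMul m quatI v = -qRightMul m quatI v :=
    ((hW v).1 hv).symm.trans ((mem_map_quatJ_iff hW v).1 hv')
  have : IsAddTorsionFree (Fin m → ℍ[ℝ]) := .of_module_rat _
  rw [map_zero]
  exact self_eq_neg.1 h

lemma codisjoint_map_quatJ (hS : ∀ v, S (S v) = -v) :
    Codisjoint W (W.map (qRightMul m quatJ)) := by
  refine codisjoint_iff.2 (Submodule.eq_top_iff'.2 fun v => ?_)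
  have hSi : S (qRightMul m quatI (S v)) = -qRightMul m quatI v := by
    rw [map_qRightMul, hS, map_neg]
  have hii : qRightMul m quatI (qRightMul m quatI (S v)) = -S v := by
    rw [qRightMul_qRightMul, quatI_mul_quatI, qRightMul_neg_one]
  have hplus : v - qRightMul m quatI (S v) ∈ W := by
    rw [hW, map_sub, hSi, map_sub, hii]
    abel
  have hminus : v + qRightMul m quatI (S v) ∈ W.map (qRightMul m quatJ) := by
    rw [mem_map_quatJ_iff hW, map_add, hSi, map_add, hii]
    abel
  have hv : v = (2 : ℝ)⁻¹ • (v - qRightMul m quatI (S v)) +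
      (2 : ℝ)⁻¹ • (v + qRightMul m quatI (S v)) := by
    module
  rw [hv]
  exact Submodule.add_mem_sup (W.smul_mem _ hplus) (Submodule.smul_mem _ _ hminus)

end Eigenspaces

/-- Let `S` be a complex structure on `ℍ^{n+1}` and `W = {v : S v = v·i}` its `+i`
eigenspace.  Then `W` is a complex subspace for the complex structure given by right
multiplication by `i`, of complex dimension `n+1` (real dimension `2(n+1)`), the
subspace `W·j` is also a complex subspace, and `ℍ^{n+1} = W ⊕ W·j`. -/
theorem eigenspace_decomposition_of_complex_structure (n : ℕ)
    (S : (Fin (n + 1) → ℍ[ℝ]) →ₗ[(ℍ[ℝ])ᵐᵒᵖ] (Fin (n + 1) → ℍ[ℝ]))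
    (hS : ∀ v, S (S v) = -v)
    (W : Submodule ℝ (Fin (n + 1) → ℍ[ℝ]))
    (hW : ∀ v, v ∈ W ↔ S v = qRightMul (n + 1) quatI v) :
    (∀ v ∈ W, qRightMul (n + 1) quatI v ∈ W) ∧
    finrank ℝ W = 2 * (n + 1) ∧
    (∀ v ∈ W.map (qRightMul (n + 1) quatJ),
      qRightMul (n + 1) quatI v ∈ W.map (qRightMul (n + 1) quatJ)) ∧
    IsCompl W (W.map (qRightMul (n + 1) quatJ)) := by
  have hcompl : IsCompl W (W.map (qRightMul (n + 1) quatJ)) :=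
    ⟨disjoint_map_quatJ hW, codisjoint_map_quatJ hW hS⟩
  have hdim := Submodule.finrank_add_eq_of_isCompl hcompl
  rw [finrank_map_qRightMul quatJ_ne_zero, finrank_fin_quaternion] at hdim
  exact ⟨fun _ => qRightMul_quatI_mem hW, by omega, fun _ => qRightMul_quatI_mem_map_quatJ hW,
    hcompl⟩
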